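/- arXiv:1603.00235 — 3 statements merged into one kernel-verified Lean document; each statement's English description precedes it below -/
import Mathlib

section
/- For γ ∈ (0,1), define the check function h_γ(t) = t(γ − 1{t ≤ 0}). Then for all real w and v, h_γ(w − v) − h_γ(w) = −v(γ − 1{w ≤ 0}) + ∫_0^v (1{w ≤ z} − 1{w ≤ 0}) dz (Knight's identity). -/
open intervalIntegral

private lemma step_intble (w a b : ℝ) :
    IntervalIntegrable (fun z => if w ≤ z then (1:ℝ) else 0) MeasureTheory.volume a b := by
  apply Monotone.intervalIntegrable
  intro x y hxy
  by_cases hx : w ≤ x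
  · simp [hx, hx.trans hxy]
  · by_cases hy : w ≤ y <;> simp [hx, hy]

private lemma step_int_one {w a b : ℝ} (h1 : w ≤ a) (h2 : w ≤ b) :
    (∫ z in a..b, (if w ≤ z then (1:ℝ) else 0)) = b - a := by
  rw [intervalIntegral.integral_congr (g := fun _ => (1:ℝ)) ?_]
  · simp
  · intro z hz
    have : min a b ≤ z := (Set.mem_uIcc.mp hz).elim (fun h => (min_le_left a b).trans h.1)
      (fun h => (min_le_right a b).trans h.1)
    simp [le_trans (le_min h1 h2) this]

private lemma step_int_zero {w a b : ℝ} (h1 : a ≤ w) (h2 : b ≤ w) :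
    (∫ z in a..b, (if w ≤ z then (1:ℝ) else 0)) = 0 := by
  rw [intervalIntegral.integral_congr_ae (g := fun _ => (0:ℝ))]
  · simp
  · have hne : ∀ᵐ z : ℝ, z ≠ w :=
      MeasureTheory.ae_iff.mpr (by simpa using MeasureTheory.measure_singleton (μ := MeasureTheory.volume) w)
    filter_upwards [hne] with z hz hzmem
    have : z ≤ max a b := (Set.mem_uIoc.mp hzmem).elim (fun h => h.2.trans (le_max_right a b))
      (fun h => h.2.trans (le_max_left a b))
    have hzw : z < w := lt_of_le_of_ne (this.trans (max_le h1 h2)) hz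
    simp [not_le.mpr hzw]

private lemma step_integral (w v : ℝ) :
    (∫ z in (0:ℝ)..v, (if w ≤ z then (1:ℝ) else 0)) = max v w - max 0 w := by
  have hsplit := intervalIntegral.integral_add_adjacent_intervals
    (step_intble w 0 w) (step_intble w w v)
  have h1 : (∫ z in (0:ℝ)..w, (if w ≤ z then (1:ℝ) else 0)) = min w 0 := by
    rcases le_total w 0 with h | h
    · rw [step_int_one h le_rfl]; simp [min_eq_left h]
    · rw [step_int_zero h le_rfl]; simp [min_eq_right h]
  have h2 : (∫ z in w..v, (if w ≤ z then (1:ℝ) else 0)) = max v w - w := by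
    rcases le_total w v with h | h
    · rw [step_int_one le_rfl h, max_eq_left h]
    · rw [step_int_zero le_rfl h, max_eq_right h]; ring
  rw [h1, h2] at hsplit
  rw [← hsplit]
  rcases le_total w 0 with h | h <;>
    simp [min_eq_left, min_eq_right, max_eq_left, max_eq_right, h] <;> ring

/-- Knight's identity for the quantile check function. -/
theorem knight_identity (γ : ℝ) (hγ : γ ∈ Set.Ioo (0:ℝ) 1) (w v : ℝ) :
    (w - v) * (γ - if w - v ≤ 0 then (1:ℝ) else 0) - w * (γ - if w ≤ 0 then (1:ℝ) else 0)
      = -v * (γ - if w ≤ 0 then (1:ℝ) else 0)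
        + ∫ z in (0:ℝ)..v, ((if w ≤ z then (1:ℝ) else 0) - (if w ≤ 0 then (1:ℝ) else 0)) := by
  have hint : (∫ z in (0:ℝ)..v, ((if w ≤ z then (1:ℝ) else 0) - (if w ≤ 0 then (1:ℝ) else 0)))
      = (max v w - max 0 w) - v * (if w ≤ 0 then (1:ℝ) else 0) := by
    rw [intervalIntegral.integral_sub (step_intble w 0 v) (intervalIntegrable_const),
      step_integral, intervalIntegral.integral_const, smul_eq_mul]
    ring
  rw [hint]
  by_cases hw : w ≤ 0 <;> by_cases hv : w - v ≤ 0 <;>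
    rw [show max v w = if w - v ≤ 0 then v else w by
          rcases le_or_gt (w - v) 0 with h | h
          · simp [h, max_eq_left (by linarith : w ≤ v)]
          · simp [not_le.mpr h, max_eq_right (by linarith : v ≤ w)],
        show max 0 w = if w ≤ 0 then 0 else w by
          rcases le_or_gt w 0 with h | h
          · simp [h, max_eq_left h]
          · simp [not_le.mpr h, max_eq_right h.le]] <;>
    simp only [hw, hv, if_true, if_false] <;> ring
end

section
/- Let U be a real random variable with a density f that is differentiable with |f'| ≤ C₁ everywhere and f(0) ≥ C₂ > 0, and let γ = P(U ≤ 0). Then for every real t, E[h_γ(U − t)] − E[h_γ(U)] ≥ (C₂/2)t² − (C₁/6)|t|³, where h_γ(s) = s(γ − 1{s ≤ 0}). -/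
open MeasureTheory
open scoped ENNReal NNReal

/-- Quadratic-minus-cubic lower bound on the expected check-loss difference when the
density has a bounded derivative and is bounded below at the quantile. -/
theorem check_loss_quadratic_lower_bound
    (f : ℝ → ℝ) (f' : ℝ → ℝ) (C₁ C₂ : ℝ)
    (hderiv : ∀ x, HasDerivAt f (f' x) x)
    (hC₁ : ∀ x, |f' x| ≤ C₁)
    (hC₂ : 0 < C₂) (hf0 : C₂ ≤ f 0)
    (μ : Measure ℝ) [IsProbabilityMeasure μ]
    (hμ : μ = MeasureTheory.volume.withDensity (fun x => ENNReal.ofReal (f x)))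
    (γ : ℝ) (hγ : γ = (μ (Set.Iic 0)).toReal)
    (hint : ∀ t : ℝ,
      Integrable (fun u => (u - t) * (γ - if u - t ≤ 0 then (1:ℝ) else 0)) μ)
    (t : ℝ) :
    C₂ / 2 * t ^ 2 - C₁ / 6 * |t| ^ 3
      ≤ (∫ u, (u - t) * (γ - if u - t ≤ 0 then (1:ℝ) else 0) ∂μ)
        - ∫ u, u * (γ - if u ≤ 0 then (1:ℝ) else 0) ∂μ := by
  have hfc : Continuous f := continuous_iff_continuousAt.2 fun x => (hderiv x).continuousAt
  set g : ℝ → ℝ := fun u => max (f u) 0 with hg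
  have hgc : Continuous g := hfc.max continuous_const
  have hgnn : ∀ u, 0 ≤ g u := fun u => le_max_right _ _
  -- Lipschitz lower bound on the density
  have hfb : ∀ u, C₂ - C₁ * |u| ≤ g u := by
    intro u
    have h1 : ‖f u - f 0‖ ≤ C₁ * ‖u - 0‖ :=
      Convex.norm_image_sub_le_of_norm_hasDerivWithin_le
        (f' := f') (fun x _ => (hderiv x).hasDerivWithinAt) (fun x _ => hC₁ x) convex_univ
        (Set.mem_univ 0) (Set.mem_univ u)
    rw [Real.norm_eq_abs, Real.norm_eq_abs, sub_zero] at h1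
    have h2 : f 0 - f u ≤ C₁ * |u| := by
      have := abs_le.1 h1; linarith [this.1]
    have : C₂ - C₁ * |u| ≤ f u := by linarith
    exact this.trans (le_max_left _ _)
  -- ofReal of g equals ofReal of f
  have hof : ∀ u, ENNReal.ofReal (g u) = ENNReal.ofReal (f u) := by
    intro u
    rcases le_total (f u) 0 with h | h
    · rw [hg]; simp only [max_eq_right h]
      rw [ENNReal.ofReal_eq_zero.2 le_rfl, eq_comm, ENNReal.ofReal_eq_zero]; exact h
    · rw [hg]; simp only [max_eq_left h]
  -- g is an integrable density
  have hlint : (∫⁻ u, ENNReal.ofReal (g u)) = 1 := by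
    simp_rw [hof]
    have h1 : μ Set.univ = 1 := measure_univ
    rw [hμ, withDensity_apply _ MeasurableSet.univ] at h1
    simpa using h1
  have hgint : Integrable g volume := by
    refine ⟨hgc.aestronglyMeasurable, ?_⟩
    rw [hasFiniteIntegral_iff_ofReal (Filter.Eventually.of_forall hgnn), hlint]
    exact ENNReal.one_lt_top
  -- convert μ-integrals into Lebesgue integrals against the density g
  have hμint : ∀ φ : ℝ → ℝ, (∫ u, φ u ∂μ) = ∫ u, g u * φ u := by
    intro φ
    rw [hμ]
    have hmeas : Measurable fun x => (f x).toNNReal := hfc.measurable.real_toNNReal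
    have h1 : (fun x => ENNReal.ofReal (f x)) = fun x => ((f x).toNNReal : ℝ≥0∞) := rfl
    rw [h1, integral_withDensity_eq_integral_smul hmeas φ]
    refine integral_congr_ae (Filter.Eventually.of_forall fun u => ?_)
    simp [NNReal.smul_def, Real.coe_toNNReal', hg]
  -- γ as an integral of g
  have hγ' : γ = ∫ u in Set.Iic 0, g u := by
    rw [hγ, hμ, withDensity_apply _ measurableSet_Iic]
    rw [integral_eq_lintegral_of_nonneg_ae (Filter.Eventually.of_forall hgnn)
      (hgc.aestronglyMeasurable.restrict)]
    congr 1
    exact lintegral_congr fun u => (hof u).symm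
  -- Knight-type pointwise identity
  set k : ℝ → ℝ := fun u => max (t - u) 0 - max (-u) 0 with hk
  have hk' : ∀ u, k u = max (t - u) 0 - max (-u) 0 := fun u => rfl
  have knight : ∀ u, (u - t) * (γ - if u - t ≤ 0 then (1:ℝ) else 0)
      - u * (γ - if u ≤ 0 then (1:ℝ) else 0) = -(γ * t) + k u := by
    intro u
    have h1 : (u - t ≤ 0) ↔ u ≤ t := sub_nonpos
    rcases le_or_gt u t with h | h <;> rcases le_or_gt u 0 with h0 | h0
    · rw [if_pos (h1.2 h), if_pos h0, hk' u]
      rw [max_eq_left (by linarith : (0:ℝ) ≤ t - u), max_eq_left (by linarith : (0:ℝ) ≤ -u)]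
      ring
    · rw [if_pos (h1.2 h), if_neg (not_le.2 h0), hk' u]
      rw [max_eq_left (by linarith : (0:ℝ) ≤ t - u), max_eq_right (by linarith : -u ≤ 0)]
      ring
    · rw [if_neg (fun hc => absurd (h1.1 hc) (not_le.2 h)), if_pos h0, hk' u]
      rw [max_eq_right (by linarith : t - u ≤ 0), max_eq_left (by linarith : (0:ℝ) ≤ -u)]
      ring
    · rw [if_neg (fun hc => absurd (h1.1 hc) (not_le.2 h)), if_neg (not_le.2 h0), hk' u]
      rw [max_eq_right (by linarith : t - u ≤ 0), max_eq_right (by linarith : -u ≤ 0)]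
      ring
  have hkc : Continuous k := by
    rw [hk]; fun_prop
  have hkb : ∀ u, |k u| ≤ |t| := by
    intro u
    have := abs_max_sub_max_le_abs (t - u) (-u) 0
    simpa using this
  have hkint : Integrable k μ := by
    refine (integrable_const |t|).mono' hkc.aestronglyMeasurable ?_
    exact Filter.Eventually.of_forall fun u => by simpa using hkb u
  have h0int : Integrable (fun u => u * (γ - if u ≤ 0 then (1:ℝ) else 0)) μ := by
    have := hint 0
    simpa using this
  -- the difference of expectations
  have hD : (∫ u, (u - t) * (γ - if u - t ≤ 0 then (1:ℝ) else 0) ∂μ)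
      - (∫ u, u * (γ - if u ≤ 0 then (1:ℝ) else 0) ∂μ)
      = (∫ u, k u ∂μ) - γ * t := by
    rw [← integral_sub (hint t) h0int]
    have h1 : (fun u => (u - t) * (γ - if u - t ≤ 0 then (1:ℝ) else 0)
        - u * (γ - if u ≤ 0 then (1:ℝ) else 0)) = fun u => -(γ * t) + k u := funext knight
    rw [h1, integral_add (integrable_const _) hkint, integral_const]
    simp [measure_univ]
    ring
  -- pass to Lebesgue integral
  set p : ℝ → ℝ := fun u => k u - (if u ≤ 0 then t else 0) with hp
  have hp' : ∀ u, p u = k u - (if u ≤ 0 then t else 0) := fun u => rfl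
  have hp0 : ∀ u, 0 ≤ p u := by
    intro u
    rw [hp' u, hk' u]
    rcases le_or_gt u 0 with h | h <;> rcases le_or_gt u t with h' | h'
    · rw [if_pos h, max_eq_left (by linarith : (0:ℝ) ≤ t - u),
        max_eq_left (by linarith : (0:ℝ) ≤ -u)]
      linarith
    · rw [if_pos h, max_eq_right (by linarith : t - u ≤ 0),
        max_eq_left (by linarith : (0:ℝ) ≤ -u)]
      linarith
    · rw [if_neg (not_le.2 h), max_eq_left (by linarith : (0:ℝ) ≤ t - u),
        max_eq_right (by linarith : -u ≤ 0)]
      linarith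
    · rw [if_neg (not_le.2 h), max_eq_right (by linarith : t - u ≤ 0),
        max_eq_right (by linarith : -u ≤ 0)]
      linarith
  have hkg_int : Integrable (fun u => g u * k u) volume := by
    refine (hgint.const_mul |t|).mono' (hgc.mul hkc).aestronglyMeasurable ?_
    refine Filter.Eventually.of_forall fun u => ?_
    rw [Real.norm_eq_abs, abs_mul, abs_of_nonneg (hgnn u)]
    calc g u * |k u| ≤ g u * |t| := by
          exact mul_le_mul_of_nonneg_left (hkb u) (hgnn u)
      _ = |t| * g u := mul_comm _ _
  have hind_int : Integrable (Set.indicator (Set.Iic 0) (fun u => t * g u)) volume :=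
    (hgint.const_mul t).indicator measurableSet_Iic
  have hpg : ∀ u, g u * k u - Set.indicator (Set.Iic 0) (fun u => t * g u) u = p u * g u := by
    intro u
    by_cases h : u ≤ 0
    · rw [Set.indicator_of_mem (Set.mem_Iic.2 h), hp' u, if_pos h]; ring
    · rw [Set.indicator_of_notMem (fun hc => h (Set.mem_Iic.1 hc)), hp' u, if_neg h]; ring
  have hpg_int : Integrable (fun u => p u * g u) volume := by
    refine (hkg_int.sub hind_int).congr (Filter.Eventually.of_forall fun u => hpg u)
  have key : (∫ u, (u - t) * (γ - if u - t ≤ 0 then (1:ℝ) else 0) ∂μ)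
      - (∫ u, u * (γ - if u ≤ 0 then (1:ℝ) else 0) ∂μ) = ∫ u, p u * g u := by
    rw [hD, hμint k]
    have h2 : γ * t = ∫ u, Set.indicator (Set.Iic 0) (fun u => t * g u) u := by
      rw [integral_indicator measurableSet_Iic, MeasureTheory.integral_const_mul, hγ']; ring
    rw [h2, ← integral_sub hkg_int hind_int]
    exact integral_congr_ae (Filter.Eventually.of_forall hpg)
  rw [key]
  -- lower bound the density pointwise under nonnegative p
  have hple : ∀ u, p u * (C₂ - C₁ * |u|) ≤ p u * g u :=
    fun u => mul_le_mul_of_nonneg_left (hfb u) (hp0 u)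
  -- now split on the sign of t and compute the explicit integral
  rcases le_or_gt 0 t with ht | ht
  · have heq : (fun u => p u * (C₂ - C₁ * |u|))
        = Set.indicator (Set.Ioc 0 t) (fun u => (t - u) * (C₂ - C₁ * u)) := by
      funext u
      by_cases h1 : u ≤ 0
      · have hpu : p u = 0 := by
          rw [hp' u, hk' u, if_pos h1, max_eq_left (by linarith : (0:ℝ) ≤ t - u),
            max_eq_left (by linarith : (0:ℝ) ≤ -u)]; ring
        rw [Set.indicator_of_notMem (fun hc => absurd hc.1 (not_lt.2 h1)), hpu, zero_mul]
      · by_cases h2 : u ≤ t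
        · have hm : u ∈ Set.Ioc 0 t := ⟨not_le.1 h1, h2⟩
          have hpu : p u = t - u := by
            rw [hp' u, hk' u, if_neg h1, max_eq_left (by linarith : (0:ℝ) ≤ t - u),
              max_eq_right (by linarith : -u ≤ 0)]; ring
          rw [Set.indicator_of_mem hm, hpu, abs_of_pos (not_le.1 h1)]
        · have hpu : p u = 0 := by
            rw [hp' u, hk' u, if_neg h1, max_eq_right (by linarith : t - u ≤ 0),
              max_eq_right (by linarith : -u ≤ 0)]; ring
          rw [Set.indicator_of_notMem (fun hc => absurd hc.2 h2), hpu, zero_mul]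
    have hpm_int : Integrable (fun u => p u * (C₂ - C₁ * |u|)) volume := by
      rw [heq]
      exact (integrable_indicator_iff measurableSet_Ioc).2
        ((Continuous.integrableOn_Ioc (by fun_prop)))
    have hmono : (∫ u, p u * (C₂ - C₁ * |u|)) ≤ ∫ u, p u * g u :=
      integral_mono hpm_int hpg_int hple
    refine le_trans (le_of_eq ?_) hmono
    rw [heq, integral_indicator measurableSet_Ioc,
      ← intervalIntegral.integral_of_le ht]
    have hftc : ∀ u ∈ Set.uIcc 0 t,
        HasDerivAt (fun u => C₂ * (t * u - u ^ 2 / 2) + C₁ * (u ^ 3 / 3 - t * u ^ 2 / 2))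
          ((t - u) * (C₂ - C₁ * u)) u := by
      intro u _
      have h1 := ((((hasDerivAt_id u).const_mul t).sub ((hasDerivAt_pow 2 u).div_const 2)).const_mul
          C₂).add ((((hasDerivAt_pow 3 u).div_const 3).sub
            (((hasDerivAt_pow 2 u).const_mul t).div_const 2)).const_mul C₁)
      exact h1.congr_deriv (by push_cast; ring)
    rw [intervalIntegral.integral_eq_sub_of_hasDerivAt hftc
      (Continuous.intervalIntegrable (by fun_prop) _ _)]
    rw [abs_of_nonneg ht]; ring
  · have heq : (fun u => p u * (C₂ - C₁ * |u|))
        = Set.indicator (Set.Ioc t 0) (fun u => (u - t) * (C₂ + C₁ * u)) := by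
      funext u
      by_cases h1 : u ≤ t
      · have hpu : p u = 0 := by
          rw [hp' u, hk' u, if_pos (by linarith : u ≤ 0), max_eq_left (by linarith : (0:ℝ) ≤ t - u),
            max_eq_left (by linarith : (0:ℝ) ≤ -u)]; ring
        rw [Set.indicator_of_notMem (fun hc => absurd hc.1 (not_lt.2 h1)), hpu, zero_mul]
      · by_cases h2 : u ≤ 0
        · have hm : u ∈ Set.Ioc t 0 := ⟨not_le.1 h1, h2⟩
          have hpu : p u = u - t := by
            rw [hp' u, hk' u, if_pos h2, max_eq_right (by linarith : t - u ≤ 0),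
              max_eq_left (by linarith : (0:ℝ) ≤ -u)]; ring
          rw [Set.indicator_of_mem hm, hpu, abs_of_nonpos h2]; ring
        · have hpu : p u = 0 := by
            rw [hp' u, hk' u, if_neg h2, max_eq_right (by linarith : t - u ≤ 0),
              max_eq_right (by linarith : -u ≤ 0)]; ring
          rw [Set.indicator_of_notMem (fun hc => absurd hc.2 h2), hpu, zero_mul]
    have hpm_int : Integrable (fun u => p u * (C₂ - C₁ * |u|)) volume := by
      rw [heq]
      exact (integrable_indicator_iff measurableSet_Ioc).2
        ((Continuous.integrableOn_Ioc (by fun_prop)))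
    have hmono : (∫ u, p u * (C₂ - C₁ * |u|)) ≤ ∫ u, p u * g u :=
      integral_mono hpm_int hpg_int hple
    refine le_trans (le_of_eq ?_) hmono
    rw [heq, integral_indicator measurableSet_Ioc,
      ← intervalIntegral.integral_of_le (le_of_lt ht)]
    have hftc : ∀ u ∈ Set.uIcc t 0,
        HasDerivAt (fun u => C₂ * (u ^ 2 / 2 - t * u) + C₁ * (u ^ 3 / 3 - t * u ^ 2 / 2))
          ((u - t) * (C₂ + C₁ * u)) u := by
      intro u _
      have h1 := ((((hasDerivAt_pow 2 u).div_const 2).sub ((hasDerivAt_id u).const_mul t)).const_mul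
          C₂).add ((((hasDerivAt_pow 3 u).div_const 3).sub
            (((hasDerivAt_pow 2 u).const_mul t).div_const 2)).const_mul C₁)
      exact h1.congr_deriv (by push_cast; ring)
    rw [intervalIntegral.integral_eq_sub_of_hasDerivAt hftc
      (Continuous.intervalIntegrable (by fun_prop) _ _)]
    rw [abs_of_neg ht]; ring
end

section
/- Let ρ: ℝ×ℝ → ℝ be L-Lipschitz in its second argument. For data (Y_i, X_i, Q_i), i = 1,…,n, parameters α = (β,δ), α₀ = (β₀,δ₀) in ℝ^{2p} with θ = β+δ, θ₀ = β₀+δ₀, and τ > τ₀, define D_n(α,τ) = [R_n(α,τ) − R_n(α,τ₀)] − [R_n(α₀,τ) − R_n(α₀,τ₀)], where R_n(α,τ) = n⁻¹ Σ_i ρ(Y_i, X_i'β + X_i'δ·1{Q_i>τ}). Then D_n(α,τ) = n⁻¹ Σ_i [ρ(Y_i,X_i'β) − ρ(Y_i,X_i'β₀)]·1{τ₀<Q_i≤τ} − n⁻¹ Σ_i [ρ(Y_i,X_i'θ) − ρ(Y_i,X_i'θ₀)]·1{τ₀<Q_i≤τ}, and consequently |D_n(α,τ)| ≤ 2L·(max_{i,j}|X_{ij}|)·|α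 − α₀|₁ · n⁻¹ Σ_i 1{τ₀<Q_i≤τ}. -/
open Matrix

lemma dot_diff_bound {p : ℕ} (x b b' : Fin p → ℝ) (M : ℝ) (hM : ∀ j, |x j| ≤ M) :
    |x ⬝ᵥ b - x ⬝ᵥ b'| ≤ M * ∑ j, |b j - b' j| := by
  have h : x ⬝ᵥ b - x ⬝ᵥ b' = ∑ j, x j * (b j - b' j) := by
    simp [dotProduct, ← Finset.sum_sub_distrib, mul_sub]
  rw [h, Finset.mul_sum]
  refine (Finset.abs_sum_le_sum_abs _ _).trans (Finset.sum_le_sum fun j _ => ?_)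
  rw [abs_mul]
  exact mul_le_mul_of_nonneg_right (hM j) (abs_nonneg _)

/-- Decomposition and bound for the empirical process difference
`D_n(α,τ) = [R_n(α,τ) - R_n(α,τ₀)] - [R_n(α₀,τ) - R_n(α₀,τ₀)]` with `τ > τ₀`,
for an `L`-Lipschitz loss. -/
theorem empirical_change_decomposition_and_bound
    {n p : ℕ} (ρ : ℝ → ℝ → ℝ) (L : ℝ) (hL : 0 ≤ L)
    (hlip : ∀ y a b : ℝ, |ρ y a - ρ y b| ≤ L * |a - b|)
    (Y : Fin n → ℝ) (X : Fin n → Fin p → ℝ) (Q : Fin n → ℝ)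
    (β δ β₀ δ₀ : Fin p → ℝ) (τ τ₀ : ℝ) (hτ : τ₀ < τ)
    (Rn : (Fin p → ℝ) → (Fin p → ℝ) → ℝ → ℝ)
    (hRn : Rn = fun b d s =>
      (n : ℝ)⁻¹ * ∑ i, ρ (Y i) (X i ⬝ᵥ b + (X i ⬝ᵥ d) * (if s < Q i then (1:ℝ) else 0)))
    (Dn : ℝ)
    (hDn : Dn = (Rn β δ τ - Rn β δ τ₀) - (Rn β₀ δ₀ τ - Rn β₀ δ₀ τ₀)) :
    (Dn = (n : ℝ)⁻¹ * ∑ i, (ρ (Y i) (X i ⬝ᵥ β) - ρ (Y i) (X i ⬝ᵥ β₀))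
            * (if τ₀ < Q i ∧ Q i ≤ τ then (1:ℝ) else 0)
        - (n : ℝ)⁻¹ * ∑ i, (ρ (Y i) (X i ⬝ᵥ (β + δ)) - ρ (Y i) (X i ⬝ᵥ (β₀ + δ₀)))
            * (if τ₀ < Q i ∧ Q i ≤ τ then (1:ℝ) else 0)) ∧
    |Dn| ≤ 2 * L * (⨆ i : Fin n, ⨆ j : Fin p, |X i j|)
        * ((∑ j, |β j - β₀ j|) + ∑ j, |δ j - δ₀ j|)
        * ((n : ℝ)⁻¹ * ∑ i, (if τ₀ < Q i ∧ Q i ≤ τ then (1:ℝ) else 0)) := by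
  set M : ℝ := ⨆ i : Fin n, ⨆ j : Fin p, |X i j| with hMdef
  set S : ℝ := (∑ j, |β j - β₀ j|) + ∑ j, |δ j - δ₀ j| with hSdef
  have hident : Dn = (n : ℝ)⁻¹ * ∑ i, (ρ (Y i) (X i ⬝ᵥ β) - ρ (Y i) (X i ⬝ᵥ β₀))
            * (if τ₀ < Q i ∧ Q i ≤ τ then (1:ℝ) else 0)
        - (n : ℝ)⁻¹ * ∑ i, (ρ (Y i) (X i ⬝ᵥ (β + δ)) - ρ (Y i) (X i ⬝ᵥ (β₀ + δ₀)))
            * (if τ₀ < Q i ∧ Q i ≤ τ then (1:ℝ) else 0) := by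
    rw [hDn, hRn]
    simp only [← mul_sub, ← Finset.sum_sub_distrib]
    congr 1
    refine Finset.sum_congr rfl fun i _ => ?_
    by_cases h1 : τ₀ < Q i
    · by_cases h2 : Q i ≤ τ
      · simp [h1, h2, not_lt.mpr h2, dotProduct_add]
        ring
      · simp [h1, h2, lt_of_not_ge h2, hτ.trans (lt_of_not_ge h2)]
    · have h2 : ¬ τ < Q i := fun h => h1 (hτ.trans h)
      simp [h1, h2]
  refine ⟨hident, ?_⟩
  rw [hident, ← mul_sub, ← Finset.sum_sub_distrib, abs_mul]
  have hn : |(n : ℝ)⁻¹| = (n : ℝ)⁻¹ := abs_of_nonneg (by positivity)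
  rw [hn, show 2 * L * M * S * ((n : ℝ)⁻¹ * ∑ i, (if τ₀ < Q i ∧ Q i ≤ τ then (1:ℝ) else 0))
      = (n : ℝ)⁻¹ * ∑ i, (2 * L * M * S) * (if τ₀ < Q i ∧ Q i ≤ τ then (1:ℝ) else 0) by
      rw [← Finset.mul_sum]; ring]
  refine mul_le_mul_of_nonneg_left ?_ (by positivity)
  refine (Finset.abs_sum_le_sum_abs _ _).trans (Finset.sum_le_sum fun i _ => ?_)
  have hMX : ∀ j, |X i j| ≤ M := by
    intro j
    refine le_trans (le_ciSup (f := fun j => |X i j|) (Set.Finite.bddAbove (Set.finite_range _)) j)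
      (le_ciSup (f := fun i => ⨆ j, |X i j|) (Set.Finite.bddAbove (Set.finite_range _)) i)
  have hM0 : 0 ≤ M := Real.iSup_nonneg fun i => Real.iSup_nonneg fun j => abs_nonneg _
  have hS0b : (0:ℝ) ≤ ∑ j, |β j - β₀ j| := Finset.sum_nonneg fun j _ => abs_nonneg _
  have hS0d : (0:ℝ) ≤ ∑ j, |δ j - δ₀ j| := Finset.sum_nonneg fun j _ => abs_nonneg _
  by_cases hi : τ₀ < Q i ∧ Q i ≤ τ
  · simp only [hi, and_self, if_true, mul_one]
    have hA : |ρ (Y i) (X i ⬝ᵥ β) - ρ (Y i) (X i ⬝ᵥ β₀)| ≤ L * (M * ∑ j, |β j - β₀ j|) :=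
      (hlip _ _ _).trans (mul_le_mul_of_nonneg_left (dot_diff_bound _ _ _ _ hMX) hL)
    have hB : |ρ (Y i) (X i ⬝ᵥ (β + δ)) - ρ (Y i) (X i ⬝ᵥ (β₀ + δ₀))|
        ≤ L * (M * ∑ j, |(β + δ) j - (β₀ + δ₀) j|) :=
      (hlip _ _ _).trans (mul_le_mul_of_nonneg_left (dot_diff_bound _ _ _ _ hMX) hL)
    have hθ : ∑ j, |(β + δ) j - (β₀ + δ₀) j| ≤ S := by
      rw [hSdef, ← Finset.sum_add_distrib]
      refine Finset.sum_le_sum fun j _ => ?_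
      have : (β + δ) j - (β₀ + δ₀) j = (β j - β₀ j) + (δ j - δ₀ j) := by
        simp [Pi.add_apply]; ring
      rw [this]; exact abs_add_le _ _
    have hβ : ∑ j, |β j - β₀ j| ≤ S := le_add_of_nonneg_right hS0d
    have hA' : |ρ (Y i) (X i ⬝ᵥ β) - ρ (Y i) (X i ⬝ᵥ β₀)| ≤ L * (M * S) :=
      hA.trans (by gcongr)
    have hB' : |ρ (Y i) (X i ⬝ᵥ (β + δ)) - ρ (Y i) (X i ⬝ᵥ (β₀ + δ₀))| ≤ L * (M * S) :=
      hB.trans (by gcongr)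
    calc |_ - _| ≤ _ := abs_sub _ _
      _ ≤ L * (M * S) + L * (M * S) := add_le_add hA' hB'
      _ = 2 * L * M * S := by ring
  · simp [hi]
end
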